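/- arXiv:2310.08935 — 4 statements merged into one kernel-verified Lean document; each statement's English description precedes it below -/
import Mathlib

section
/- (Lemma 6, Appendix C.) Let c : ℤ → ℤ be strictly increasing and define v(m,n) = (−1)^{c_n − c_m + n − m} ∈ {−1, +1}. Let i < j be integers with v(i,j) = −1. Then at least one of the following holds: (I) there exists φ with i < φ ≤ j such that (1) (−1)^{φ−i} = −1 and v(i,φ) = −1; (2) for every m with i < m < φ, if (−1)^{m−i} = −1 and v(i,m) = −1, then there exists k with i < k < m, (−1)^{m−k} = −1 and v(k,m) = −1; (3) for every n with i < n < φ, if (−1)^{φ−n} = −1 and v(n,φ) = −1, then there exists k with n < k < φ, (−1)^{k−n} = −1 and v(n,k) = −1; or (II) there exists ψ with i ≤ ψ < j such that (1) (−1)^{j−ψ} = −1 and v(ψ,j) = −1; (2) for every m with ψ < m < j, if (−1)^{m−ψ} = −1 and v(ψ,m) = −1, then there exists k with ψ < k < m, (−1)^{m−k} = −1 and v(k,m) = −1; (3) for every n with ψ < n < j, if (−1)^{j−n} = −1 and v(n,j) = −1, then there exists k with n < k < j, (−1)^{k−n} = −1 and v(n,k) = −1. Moreover, if φ exists and φ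 = j, then ψ = i satisfies the conditions in (II). -/
/-- `v(m,n) = (−1)^{c_n − c_m + n − m}` (for the indices used below the exponent is
a nonnegative integer, so `Int.toNat` is faithful). -/
def vSign (c : ℤ → ℤ) (m n : ℤ) : ℤ := (-1 : ℤ) ^ (c n - c m + n - m).toNat

/-- `(−1)^{b − a}` for `a ≤ b`. -/
def parSign (a b : ℤ) : ℤ := (-1 : ℤ) ^ (b - a).toNat

/-- The defining conditions (1)–(3) shared by `φ` (at base point `i`) and `ψ`
(at end point `φ`) in Lemma 6 of Appendix C. -/
def GoodPair (c : ℤ → ℤ) (i φ : ℤ) : Prop :=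
  (parSign i φ = -1 ∧ vSign c i φ = -1) ∧
  (∀ m, i < m → m < φ → parSign i m = -1 → vSign c i m = -1 →
      ∃ k, i < k ∧ k < m ∧ parSign k m = -1 ∧ vSign c k m = -1) ∧
  (∀ n, i < n → n < φ → parSign n φ = -1 → vSign c n φ = -1 →
      ∃ k, n < k ∧ k < φ ∧ parSign n k = -1 ∧ vSign c n k = -1)

private lemma negOnePow_eq_neg_one_iff (n : ℕ) : ((-1 : ℤ) ^ n = -1) ↔ n % 2 = 1 := by
  rcases Nat.even_or_odd n with h | h
  · have hpow : (-1 : ℤ) ^ n = 1 := h.neg_one_pow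
    rw [Nat.even_iff] at h
    constructor
    · intro h1; rw [hpow] at h1; norm_num at h1
    · intro h2; exfalso; omega
  · have hpow : (-1 : ℤ) ^ n = -1 := h.neg_one_pow
    rw [Nat.odd_iff] at h
    exact ⟨fun _ => h, fun _ => hpow⟩

/-- `P(a,b)`: `b − a` is odd and `c b − c a` is even. -/
def Pc (c : ℤ → ℤ) (a b : ℤ) : Prop := (b - a) % 2 = 1 ∧ (c b - c a) % 2 = 0

private lemma vSign_iff {c : ℤ → ℤ} (hc : StrictMono c) {a b : ℤ} (hab : a < b) :
    (vSign c a b = -1) ↔ (c b - c a + b - a) % 2 = 1 := by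
  have hca : c a < c b := hc hab
  unfold vSign
  rw [negOnePow_eq_neg_one_iff]
  constructor <;> (intro h; omega)

private lemma pair_iff {c : ℤ → ℤ} (hc : StrictMono c) {a b : ℤ} (hab : a < b) :
    (parSign a b = -1 ∧ vSign c a b = -1) ↔ Pc c a b := by
  have hca : c a < c b := hc hab
  unfold parSign vSign Pc
  rw [negOnePow_eq_neg_one_iff, negOnePow_eq_neg_one_iff]
  constructor
  · rintro ⟨h1, h2⟩; constructor <;> omega
  · rintro ⟨h1, h2⟩; constructor <;> omega

/-- `Pc`-version of `GoodPair`. -/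
def Good' (c : ℤ → ℤ) (a b : ℤ) : Prop :=
  Pc c a b ∧
  (∀ m, a < m → m < b → Pc c a m → ∃ k, a < k ∧ k < m ∧ Pc c k m) ∧
  (∀ n, a < n → n < b → Pc c n b → ∃ k, n < k ∧ k < b ∧ Pc c n k)

private lemma good'_goodPair {c : ℤ → ℤ} (hc : StrictMono c) {a b : ℤ} (hab : a < b)
    (h : Good' c a b) : GoodPair c a b := by
  obtain ⟨h1, h2, h3⟩ := h
  refine ⟨(pair_iff hc hab).mpr h1, ?_, ?_⟩
  · intro m hm1 hm2 hp hv
    obtain ⟨k, hk1, hk2, hk3⟩ := h2 m hm1 hm2 ((pair_iff hc hm1).mp ⟨hp, hv⟩)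
    have hkk := (pair_iff hc hk2).mpr hk3
    exact ⟨k, hk1, hk2, hkk.1, hkk.2⟩
  · intro n hn1 hn2 hp hv
    obtain ⟨k, hk1, hk2, hk3⟩ := h3 n hn1 hn2 ((pair_iff hc hn2).mp ⟨hp, hv⟩)
    have hkk := (pair_iff hc hk1).mpr hk3
    exact ⟨k, hk1, hk2, hkk.1, hkk.2⟩

/-- If some `f ∈ (i,j]` satisfies (1) and (3), then taking a minimal one also gives (2). -/
private lemma left_ind (c : ℤ → ℤ) (i j : ℤ) :
    ∀ N : ℕ, ∀ f : ℤ, i < f → f ≤ j → Pc c i f →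
      (∀ n, i < n → n < f → Pc c n f → ∃ k, n < k ∧ k < f ∧ Pc c n k) →
      (f - i).toNat ≤ N → ∃ φ, i < φ ∧ φ ≤ j ∧ Good' c i φ := by
  intro N
  induction N with
  | zero => intro f h1 _ _ _ hle; exfalso; omega
  | succ N ih =>
    intro f h1 h2 h3 hC3 hle
    by_cases hC2 : ∀ m, i < m → m < f → Pc c i m → ∃ k, i < k ∧ k < m ∧ Pc c k m
    · exact ⟨f, h1, h2, h3, hC2, hC3⟩
    · push_neg at hC2
      obtain ⟨m, hm1, hm2, hm3, hm4⟩ := hC2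
      refine ih m hm1 (le_of_lt (lt_of_lt_of_le hm2 h2)) hm3 ?_ (by omega)
      intro n hn1 hn2 hn3
      exact (hm4 n hn1 hn2 hn3).elim

/-- Dual of `left_ind`. -/
private lemma right_ind (c : ℤ → ℤ) (i j : ℤ) :
    ∀ N : ℕ, ∀ s : ℤ, i ≤ s → s < j → Pc c s j →
      (∀ m, s < m → m < j → Pc c s m → ∃ k, s < k ∧ k < m ∧ Pc c k m) →
      (j - s).toNat ≤ N → ∃ ψ, i ≤ ψ ∧ ψ < j ∧ Good' c ψ j := by
  intro N
  induction N with
  | zero => intro s _ h2 _ _ hle; exfalso; omega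
  | succ N ih =>
    intro s h1 h2 h3 hC2 hle
    by_cases hC3 : ∀ n, s < n → n < j → Pc c n j → ∃ k, n < k ∧ k < j ∧ Pc c n k
    · exact ⟨s, h1, h2, h3, hC2, hC3⟩
    · push_neg at hC3
      obtain ⟨n, hn1, hn2, hn3, hn4⟩ := hC3
      refine ih n (le_of_lt (lt_of_le_of_lt h1 hn1)) hn2 hn3 ?_ (by omega)
      intro m hm1 hm2 hm3
      exact (hn4 m hm1 hm2 hm3).elim

/-- Main combinatorial statement. -/
private theorem main' (c : ℤ → ℤ) (i j : ℤ) (hij : i < j)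
    (hv : (c j - c i + j - i) % 2 = 1) :
    (∃ φ, i < φ ∧ φ ≤ j ∧ Good' c i φ) ∨ (∃ ψ, i ≤ ψ ∧ ψ < j ∧ Good' c ψ j) := by
  classical
  by_cases hpar : (j - i) % 2 = 1
  · -- Case A : j − i odd, c j − c i even
    have hE : (c j - c i) % 2 = 0 := by omega
    by_cases hT : ∃ k, i < k ∧ k < j ∧ (c k - c i) % 2 = 0
    · obtain ⟨p, hp, hpmin⟩ := Int.exists_least_of_bdd
        (P := fun k => i < k ∧ k < j ∧ (c k - c i) % 2 = 0)
        ⟨i, fun z hz => le_of_lt hz.1⟩ hT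
      obtain ⟨s, hs, hsmax⟩ := Int.exists_greatest_of_bdd
        (P := fun k => i < k ∧ k < j ∧ (c k - c i) % 2 = 0)
        ⟨j, fun z hz => le_of_lt hz.2.1⟩ hT
      obtain ⟨hp1, hp2, hp3⟩ := hp
      obtain ⟨hs1, hs2, hs3⟩ := hs
      by_cases hpp : (p - i) % 2 = 1
      · left
        refine ⟨p, hp1, le_of_lt hp2, ⟨hpp, hp3⟩, ?_, ?_⟩
        · intro m hm1 hm2 hm3
          obtain ⟨hma, hmb⟩ := hm3
          exact absurd (hpmin m ⟨hm1, lt_trans hm2 hp2, hmb⟩) (by omega)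
        · intro n hn1 hn2 hn3
          obtain ⟨hna, hnb⟩ := hn3
          exact absurd (hpmin n ⟨hn1, lt_trans hn2 hp2, by omega⟩) (by omega)
      · by_cases hss : (s - i) % 2 = 0
        · right
          refine ⟨s, le_of_lt hs1, hs2, ⟨by omega, by omega⟩, ?_, ?_⟩
          · intro m hm1 hm2 hm3
            obtain ⟨hma, hmb⟩ := hm3
            exact absurd (hsmax m ⟨lt_trans hs1 hm1, hm2, by omega⟩) (by omega)
          · intro n hn1 hn2 hn3
            obtain ⟨hna, hnb⟩ := hn3
            exact absurd (hsmax n ⟨lt_trans hs1 hn1, hn2, by omega⟩) (by omega)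
        · left
          refine ⟨j, hij, le_refl j, ⟨hpar, hE⟩, ?_, ?_⟩
          · intro m hm1 hm2 hm3
            obtain ⟨hma, hmb⟩ := hm3
            have hpm := hpmin m ⟨hm1, hm2, hmb⟩
            exact ⟨p, hp1, by omega, by omega, by omega⟩
          · intro n hn1 hn2 hn3
            obtain ⟨hna, hnb⟩ := hn3
            have hsn := hsmax n ⟨hn1, hn2, by omega⟩
            exact ⟨s, by omega, hs2, by omega, by omega⟩
    · left
      refine ⟨j, hij, le_refl j, ⟨hpar, hE⟩, ?_, ?_⟩
      · intro m hm1 hm2 hm3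
        exact absurd ⟨m, hm1, hm2, hm3.2⟩ hT
      · intro n hn1 hn2 hn3
        obtain ⟨hna, hnb⟩ := hn3
        exact absurd ⟨n, hn1, hn2, by omega⟩ hT
  · -- Case B : j − i even, c j − c i odd
    have hpar0 : (j - i) % 2 = 0 := by omega
    have hO : (c j - c i) % 2 = 1 := by omega
    by_contra hcon
    have hnophi : ¬ ∃ φ, i < φ ∧ φ ≤ j ∧ Good' c i φ := fun h => hcon (Or.inl h)
    have hnopsi : ¬ ∃ ψ, i ≤ ψ ∧ ψ < j ∧ Good' c ψ j := fun h => hcon (Or.inr h)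
    have NF : ∀ f, i < f → f ≤ j → Pc c i f →
        ∃ n, i < n ∧ n < f ∧ Pc c n f ∧ ∀ k, n < k → k < f → ¬ Pc c n k := by
      intro f h1 h2 h3
      by_contra hno
      push_neg at hno
      exact hnophi (left_ind c i j (f - i).toNat f h1 h2 h3 hno le_rfl)
    have NS : ∀ s, i ≤ s → s < j → Pc c s j →
        ∃ m, s < m ∧ m < j ∧ Pc c s m ∧ ∀ k, s < k → k < m → ¬ Pc c k m := by
      intro s h1 h2 h3
      by_contra hno
      push_neg at hno
      exact hnopsi (right_ind c i j (j - s).toNat s h1 h2 h3 hno le_rfl)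
    have descent : ∀ N : ℕ, ∀ s : ℤ, i < s → s < j →
        (s - i) % 2 = 1 → (c s - c i) % 2 = 1 →
        (∀ x, i < x → x < s → (x - i) % 2 = 0 → (c x - c i) % 2 = 0 →
          ∃ b, x < b ∧ b < s ∧ (b - i) % 2 = 1 ∧ (c b - c i) % 2 = 0) →
        (j - s).toNat ≤ N → False := by
      intro N
      induction N with
      | zero => intro s _ h2 _ _ _ hle; omega
      | succ N ih =>
        intro s hs1 hs2 hs3 hs4 hQ hle
        obtain ⟨m, hm1, hm2, hm3, hm4⟩ := NS s (le_of_lt hs1) hs2 ⟨by omega, by omega⟩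
        obtain ⟨hm3a, hm3b⟩ := hm3
        obtain ⟨a, ⟨ha1, ha2, ha3, ha4⟩, hamin⟩ := Int.exists_least_of_bdd
          (P := fun a' => s < a' ∧ a' ≤ m ∧ (a' - i) % 2 = 0 ∧ (c a' - c i) % 2 = 1)
          ⟨s, fun z hz => le_of_lt hz.1⟩ ⟨m, hm1, le_refl m, by omega, by omega⟩
        have F1 : ∀ x, s < x → x < a → (c x - c i) % 2 = 0 := by
          intro x hx1 hx2
          by_contra hxc
          by_cases hxp : (x - i) % 2 = 1
          · exact hm4 x hx1 (by omega) ⟨by omega, by omega⟩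
          · exact absurd (hamin x ⟨hx1, by omega, by omega, by omega⟩) (by omega)
        have haj : a + 1 ≤ j := by omega
        by_cases hB : (c (a + 1) - c i) % 2 = 0
        · -- a+1 is a partner of i; use NF to contradict
          obtain ⟨x, hx1, hx2, hx3, hx4⟩ := NF (a + 1) (by omega) haj ⟨by omega, hB⟩
          obtain ⟨hx3a, hx3b⟩ := hx3
          have hxi : (x - i) % 2 = 0 := by omega
          have hxe : (c x - c i) % 2 = 0 := by omega
          rcases lt_trichotomy x s with hlt | heq | hgt
          · obtain ⟨b, hb1, hb2, hb3, hb4⟩ := hQ x hx1 hlt hxi hxe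
            exact hx4 b hb1 (by omega) ⟨by omega, by omega⟩
          · omega
          · have hxna : x ≠ a := by intro h; rw [h] at hxe; omega
            have hF := F1 (a - 1) (by omega) (by omega)
            exact hx4 (a - 1) (by omega) (by omega) ⟨by omega, by omega⟩
        · -- a+1 continues the descent
          have hC : (c (a + 1) - c i) % 2 = 1 := by omega
          refine ih (a + 1) (by omega) (by omega) (by omega) hC ?_ (by omega)
          intro x hx1 hx2 hx3 hx4
          rcases lt_trichotomy x s with hlt | heq | hgt
          · obtain ⟨b, hb1, hb2, hb3, hb4⟩ := hQ x hx1 hlt hx3 hx4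
            exact ⟨b, hb1, by omega, hb3, hb4⟩
          · exfalso; omega
          · have hxna : x ≠ a := by intro h; rw [h] at hx4; omega
            have hF := F1 (a - 1) (by omega) (by omega)
            exact ⟨a - 1, by omega, by omega, by omega, hF⟩
    have hbase : (c (i + 1) - c i) % 2 = 1 := by
      by_contra hb
      obtain ⟨n, hn1, hn2, _, _⟩ := NF (i + 1) (by omega) (by omega) ⟨by omega, by omega⟩
      omega
    exact descent (j - (i + 1)).toNat (i + 1) (by omega) (by omega) (by omega) hbase
      (fun x hx1 hx2 _ _ => absurd hx2 (by omega)) le_rfl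

/-- Lemma 6 (Appendix C): if `c` is strictly increasing, `i < j` and `v(i,j) = −1`,
then either a point `φ` with `i < φ ≤ j` satisfying conditions (1)–(3) at base `i`
exists, or a point `ψ` with `i ≤ ψ < j` satisfying conditions (1)–(3) with end `j`
exists. Moreover, if `φ` exists and `φ = j`, then `ψ = i` satisfies (II). -/
theorem lemma6_phi_or_psi_exists (c : ℤ → ℤ) (hc : StrictMono c)
    (i j : ℤ) (hij : i < j) (hv : vSign c i j = -1) :
    ((∃ φ, i < φ ∧ φ ≤ j ∧ GoodPair c i φ) ∨
      (∃ ψ, i ≤ ψ ∧ ψ < j ∧ GoodPair c ψ j)) ∧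
    (∀ φ, i < φ → φ ≤ j → GoodPair c i φ → φ = j →
      i ≤ i ∧ i < j ∧ GoodPair c i j) := by
  constructor
  · have hv' : (c j - c i + j - i) % 2 = 1 := (vSign_iff hc hij).mp hv
    rcases main' c i j hij hv' with ⟨φ, h1, h2, h3⟩ | ⟨ψ, h1, h2, h3⟩
    · exact Or.inl ⟨φ, h1, h2, good'_goodPair hc h1 h3⟩
    · exact Or.inr ⟨ψ, h1, h2, good'_goodPair hc h2 h3⟩
  · intro φ _ _ h3 he
    subst he
    exact ⟨le_refl i, hij, h3⟩
end

section
/- (Theorem 3; proof of Ethier and Lee's conjecture for J = 2.) Let p_A, p_B ∈ (0,1) with p_A ≠ p_B, and let D be any nonrandom periodic pattern strategy with r ≥ 1 plays of arm A and s ≥ 1 plays of arm B. Then p°_D < (r p°_A + s p°_B)/(r+s); equivalently, the casino's asymptotic profit per coup R_D = 2(r p°_A + s p°_B)/(r+s) − 2 p°_D is strictly positive, i.e., the Parrondo effect is present for every nonrandom periodic pattern strategy D. -/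
open Finset
open scoped Classical

/-- `p°` for a single arm with win probability `x` (Futurity parameter `J = 2`):
`p° = x (1-x)² / (1 - (1-x)²)`. -/
noncomputable def poArm (x : ℝ) : ℝ := x * (1 - x) ^ 2 / (1 - (1 - x) ^ 2)

/-- `p°_D = (1/(r+s)) Σ_{k=1}^{r+s} (Σ_{j=1}^{r+s} p_j Π_{i=j+1}^{j+2k} q_i) / (1 − (q_A^r q_B^s)²)`. -/
noncomputable def pCircD (p : ℕ → ℝ) (r s : ℕ) (qA qB : ℝ) : ℝ :=
  (1 / ((r + s : ℕ) : ℝ)) *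
    ∑ k ∈ Finset.Icc 1 (r + s),
      (∑ j ∈ Finset.Icc 1 (r + s),
          p j * ∏ i ∈ Finset.Icc (j + 1) (j + 2 * k), (1 - p i)) /
        (1 - (qA ^ r * qB ^ s) ^ 2)

/-- The casino's asymptotic profit per coup `R_D = 2(r p°_A + s p°_B)/(r+s) − 2 p°_D`. -/
noncomputable def RD (p : ℕ → ℝ) (r s : ℕ) (pA pB : ℝ) : ℝ :=
  2 * ((r : ℝ) * poArm pA + (s : ℝ) * poArm pB) / ((r + s : ℕ) : ℝ)
    - 2 * pCircD p r s (1 - pA) (1 - pB)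

private lemma sum_range_shift (F : ℕ → ℝ) (n : ℕ) (h : F n = F 0) :
    ∑ i ∈ Finset.range n, F (i + 1) = ∑ i ∈ Finset.range n, F i := by
  have h1 := Finset.sum_range_succ' F n
  have h2 := Finset.sum_range_succ F n
  rw [h2] at h1
  linarith

private lemma sum_Icc_one (F : ℕ → ℝ) (n : ℕ) :
    ∑ j ∈ Finset.Icc 1 n, F j = ∑ i ∈ Finset.range n, F (i + 1) := by
  rw [← Finset.Ico_add_one_right_eq_Icc, Finset.sum_Ico_eq_sum_range]
  exact Finset.sum_congr (by norm_num) fun i _ => by rw [Nat.add_comm]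

private lemma sum_Icc_shift (F : ℕ → ℝ) (n : ℕ) (h : ∀ i, F (i + n) = F i) :
    ∑ j ∈ Finset.Icc 1 n, F (j + 1) = ∑ j ∈ Finset.Icc 1 n, F j := by
  rw [sum_Icc_one (fun j => F (j + 1)) n, sum_Icc_one F n]
  exact sum_range_shift (fun i => F (i + 1)) n
    (by show F (n + 1) = F 1; rw [Nat.add_comm]; exact h 1)

private lemma sum_pair_aux (g : ℕ → ℝ) (M : ℕ) :
    ∑ i ∈ Finset.range (2 * M), g i
      = ∑ k ∈ Finset.range M, (g (2 * k) + g (2 * k + 1)) := by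
  induction M with
  | zero => simp
  | succ m ih =>
      have h : 2 * (m + 1) = (2 * m + 1) + 1 := by ring
      rw [h, Finset.sum_range_succ, Finset.sum_range_succ, ih, Finset.sum_range_succ]
      ring

private lemma frac_identity (a d : ℝ) (h : 0 < 1 + d) :
    a - a / (1 + d) = a * d - a * d ^ 2 / (1 + d) := by
  have : (1 + d) ≠ 0 := ne_of_gt h
  field_simp
  ring

private lemma frac_identity2 (a d : ℝ) (h : 0 < 1 + d) :
    d ^ 2 / 2 - a * d ^ 2 / (1 + d) = d ^ 2 * ((1 - 2 * a + d) / (2 * (1 + d))) := by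
  have : (1 + d) ≠ 0 := ne_of_gt h
  field_simp
  ring

private lemma poArm_eq (x : ℝ) (h0 : 0 < x) (h1 : x < 1) :
    poArm x = (1 - x) ^ 2 / (1 + (1 - x)) := by
  rw [poArm, div_eq_div_iff (by nlinarith) (by nlinarith)]
  ring

set_option maxHeartbeats 1000000 in
/-- Theorem 3 (proof of Ethier and Lee's conjecture for `J = 2`): for `p_A ≠ p_B`
and any nonrandom periodic pattern strategy `D` with `r ≥ 1` plays of arm `A` and
`s ≥ 1` plays of arm `B`, one has `p°_D < (r p°_A + s p°_B)/(r+s)`; equivalently,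
`R_D > 0`, i.e. the Parrondo effect is present. -/
theorem theorem3_parrondo_effect
    (pA pB : ℝ) (hpA : pA ∈ Set.Ioo (0 : ℝ) 1) (hpB : pB ∈ Set.Ioo (0 : ℝ) 1)
    (hne : pA ≠ pB)
    (r s : ℕ) (hr : 1 ≤ r) (hs : 1 ≤ s)
    (p : ℕ → ℝ)
    (hper : ∀ i, p (i + (r + s)) = p i)
    (hval : ∀ i, p i = pA ∨ p i = pB)
    (hcardA : ((Finset.Icc 1 (r + s)).filter fun i => p i = pA).card = r)
    (hcardB : ((Finset.Icc 1 (r + s)).filter fun i => p i = pB).card = s) :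
    pCircD p r s (1 - pA) (1 - pB)
        < ((r : ℝ) * poArm pA + (s : ℝ) * poArm pB) / ((r + s : ℕ) : ℝ) ∧
      0 < RD p r s pA pB := by
  obtain ⟨hpA0, hpA1⟩ := hpA
  obtain ⟨hpB0, hpB1⟩ := hpB
  set n := r + s with hn
  have hn1 : 1 ≤ n := le_trans hr (Nat.le_add_right r s)
  have hnpos : (0 : ℝ) < (n : ℝ) := by exact_mod_cast Nat.pos_of_ne_zero (by omega)
  set q : ℕ → ℝ := fun i => 1 - p i with hq
  have hq0 : ∀ i, 0 < q i := by
    intro i; rcases hval i with h | h <;> simp only [hq, h] <;> linarith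
  have hq1 : ∀ i, q i < 1 := by
    intro i; rcases hval i with h | h <;> simp only [hq, h] <;> linarith
  have hqper : ∀ i, q (i + n) = q i := fun i => by simp only [hq, hper i]
  set t : ℕ → ℕ → ℝ := fun j m => ∏ i ∈ Finset.Icc (j + 1) (j + m), q i with ht
  have ht0 : ∀ j, t j 0 = 1 := by intro j; simp [ht]
  have htsucc : ∀ j m, t j (m + 1) = t j m * q (j + m + 1) := by
    intro j m
    show (∏ i ∈ Finset.Icc (j + 1) (j + (m + 1)), q i) = _
    rw [show j + (m + 1) = (j + m) + 1 by ring]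
    exact Finset.prod_Icc_succ_top (by omega) q
  have htpos : ∀ j m, 0 < t j m := by
    intro j m
    induction m with
    | zero => rw [ht0]; norm_num
    | succ k ih => rw [htsucc]; exact mul_pos ih (hq0 _)
  have htle1 : ∀ j m, t j m ≤ 1 := by
    intro j m
    induction m with
    | zero => rw [ht0]
    | succ k ih =>
        rw [htsucc]
        nlinarith [htpos j k, hq0 (j + k + 1), hq1 (j + k + 1)]
  have htbot : ∀ j m, t j (m + 1) = q (j + 1) * t (j + 1) m := by
    intro j m
    induction m with
    | zero => rw [htsucc, ht0, ht0]; ring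
    | succ k ih =>
        rw [htsucc, ih, htsucc]
        rw [show j + 1 + k + 1 = j + (k + 1) + 1 by ring]
        ring
  have htper : ∀ j m, t (j + n) m = t j m := by
    intro j m
    induction m with
    | zero => rw [ht0, ht0]
    | succ k ih =>
        rw [htsucc, htsucc, ih, show j + n + k + 1 = (j + k + 1) + n by ring, hqper]
  have htadd : ∀ j m1 m2, t j (m1 + m2) = t j m1 * t (j + m1) m2 := by
    intro j m1 m2
    induction m2 with
    | zero => rw [ht0]; ring
    | succ k ih =>
        rw [show m1 + (k + 1) = (m1 + k) + 1 by ring, htsucc, ih, htsucc,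
          show j + m1 + k + 1 = j + (m1 + k) + 1 by ring]
        ring
  set Q : ℝ := ∏ i ∈ Finset.Icc 1 n, q i with hQ
  have hQt0 : t 0 n = Q := by
    simp only [ht, hQ, Nat.zero_add]
  have hQconst : ∀ j, t j n = Q := by
    have step : ∀ j, t (j + 1) n = t j n := by
      intro j
      have h1 : t j (n + 1) = t j n * q (j + n + 1) := htsucc j n
      have h2 : t j (n + 1) = q (j + 1) * t (j + 1) n := htbot j n
      have h3 : q (j + n + 1) = q (j + 1) := by
        rw [show j + n + 1 = (j + 1) + n by ring, hqper]
      have h4 : q (j + 1) ≠ 0 := ne_of_gt (hq0 _)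
      have h6 := h1.symm.trans h2
      rw [h3] at h6
      have h5 : q (j + 1) * t (j + 1) n = q (j + 1) * t j n := by
        rw [← h6]; ring
      exact mul_left_cancel₀ h4 h5
    intro j
    induction j with
    | zero => exact hQt0
    | succ k ih => rw [step k, ih]
  have hQ2 : ∀ j, t j (2 * n) = Q ^ 2 := by
    intro j
    rw [two_mul, htadd, hQconst, hQconst]; ring
  have hQpos : 0 < Q := by rw [← hQt0]; exact htpos 0 n
  have hQlt1 : Q < 1 := by
    obtain ⟨m, hm⟩ : ∃ m, n = m + 1 := ⟨n - 1, by omega⟩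
    rw [← hQt0, hm, htsucc]
    nlinarith [htpos 0 m, htle1 0 m, hq0 (0 + m + 1), hq1 (0 + m + 1)]
  have hc : 0 < 1 - Q ^ 2 := by nlinarith
  have hcne : (1 : ℝ) - Q ^ 2 ≠ 0 := ne_of_gt hc
  -- identify (1-pA)^r * (1-pB)^s with Q
  have hprodQ : (1 - pA) ^ r * (1 - pB) ^ s = Q := by
    rw [hQ, ← Finset.prod_filter_mul_prod_filter_not (Finset.Icc 1 n) (fun i => p i = pA) q]
    have e1 : (∏ i ∈ (Finset.Icc 1 n).filter (fun i => p i = pA), q i) = (1 - pA) ^ r := by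
      rw [Finset.prod_congr rfl (fun i hi => ?_), Finset.prod_const, hcardA]
      rw [Finset.mem_filter] at hi
      simp only [hq, hi.2]
    have e2 : (∏ i ∈ (Finset.Icc 1 n).filter (fun i => ¬ p i = pA), q i) = (1 - pB) ^ s := by
      have hfilt : (Finset.Icc 1 n).filter (fun i => ¬ p i = pA)
          = (Finset.Icc 1 n).filter (fun i => p i = pB) := by
        apply Finset.filter_congr
        intro i _
        constructor
        · intro h
          rcases hval i with h' | h'
          · exact absurd h' h
          · exact h'
        · intro h hcc; exact hne (hcc.symm.trans h)
      rw [hfilt, Finset.prod_congr rfl (fun i hi => ?_), Finset.prod_const, hcardB]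
      rw [Finset.mem_filter] at hi
      simp only [hq, hi.2]
    rw [e1, e2]
  -- the alternating tail sums
  set N : ℕ → ℝ := fun j => ∑ i ∈ Finset.range (2 * n), (-1 : ℝ) ^ i * t j (i + 1) with hN
  have hNper : ∀ j, N (j + n) = N j := by
    intro j
    simp only [hN]
    exact Finset.sum_congr rfl fun i _ => by rw [htper]
  have hNrec : ∀ j, N j = q (j + 1) * (1 - Q ^ 2 - N (j + 1)) := by
    intro j
    obtain ⟨m, hm⟩ : ∃ m, 2 * n = m + 1 := ⟨2 * n - 1, by omega⟩
    have e1 : N j = q (j + 1) * ∑ i ∈ Finset.range (2 * n), (-1 : ℝ) ^ i * t (j + 1) i := by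
      rw [hN, Finset.mul_sum]
      exact Finset.sum_congr rfl fun i _ => by rw [htbot]; ring
    have e2 : (∑ i ∈ Finset.range (2 * n), (-1 : ℝ) ^ i * t (j + 1) i)
        = 1 - (∑ i ∈ Finset.range m, (-1 : ℝ) ^ i * t (j + 1) (i + 1)) := by
      rw [hm, Finset.sum_range_succ' (fun i => (-1 : ℝ) ^ i * t (j + 1) i) m]
      have : ∀ i, (-1 : ℝ) ^ (i + 1) * t (j + 1) (i + 1)
          = -((-1 : ℝ) ^ i * t (j + 1) (i + 1)) := by intro i; ring
      rw [Finset.sum_congr rfl fun i _ => this i, Finset.sum_neg_distrib]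
      rw [pow_zero, ht0]
      ring
    have e3 : N (j + 1) = (∑ i ∈ Finset.range m, (-1 : ℝ) ^ i * t (j + 1) (i + 1))
        + (-1 : ℝ) ^ m * t (j + 1) (m + 1) := by
      simp only [hN]
      rw [hm, Finset.sum_range_succ]
    have hmodd : (-1 : ℝ) ^ m = -1 := by
      have : Odd m := ⟨n - 1, by omega⟩
      exact this.neg_one_pow
    have e4 : t (j + 1) (m + 1) = Q ^ 2 := by rw [← hm]; exact hQ2 (j + 1)
    rw [e1, e2]
    rw [hmodd, e4] at e3
    have : (∑ i ∈ Finset.range m, (-1 : ℝ) ^ i * t (j + 1) (i + 1)) = N (j + 1) + Q ^ 2 := by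
      linarith
    rw [this]; ring
  have hNpos : ∀ j, 0 < N j := by
    intro j
    simp only [hN]
    rw [sum_pair_aux]
    apply Finset.sum_pos
    · intro k _
      have h1 : (-1 : ℝ) ^ (2 * k) = 1 := (even_two_mul k).neg_one_pow
      have h2 : (-1 : ℝ) ^ (2 * k + 1) = -1 := by rw [pow_succ, h1]; ring
      rw [h1, h2]
      have h3 : t j (2 * k + 1 + 1) = t j (2 * k + 1) * q (j + (2 * k + 1) + 1) :=
        htsucc j (2 * k + 1)
      nlinarith [htpos j (2 * k + 1), hq0 (j + (2 * k + 1) + 1), hq1 (j + (2 * k + 1) + 1)]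
    · exact Finset.nonempty_range_iff.mpr (by omega)
  have hNlt' : ∀ j, N (j + 1) < 1 - Q ^ 2 := by
    intro j
    have h1 := hNpos j
    rw [hNrec j] at h1
    nlinarith [hq0 (j + 1)]
  have hNlt : ∀ j, N j < 1 - Q ^ 2 := by
    intro j
    cases j with
    | zero =>
        have : N 0 = N n := by rw [← hNper 0, Nat.zero_add]
        rw [this]
        obtain ⟨m, hm⟩ : ∃ m, n = m + 1 := ⟨n - 1, by omega⟩
        rw [hm]; exact hNlt' m
    | succ k => exact hNlt' k
  -- w
  set w : ℕ → ℝ := fun j => N j / (1 - Q ^ 2) with hw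
  have hw0 : ∀ j, 0 < w j := fun j => div_pos (hNpos j) hc
  have hw1 : ∀ j, w j < 1 := fun j => (div_lt_one hc).mpr (hNlt j)
  have hwper : ∀ j, w (j + n) = w j := fun j => by simp only [hw, hNper]
  have hwrec : ∀ j, w j = q (j + 1) * (1 - w (j + 1)) := by
    intro j
    have h := hNrec j
    simp only [hw]
    rw [h]
    field_simp
  have hwsum1 : ∀ j, w j + w (j + 1) < 1 := by
    intro j
    rw [hwrec j]
    nlinarith [hq0 (j + 1), hq1 (j + 1), hw0 (j + 1), hw1 (j + 1)]
  -- sums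
  set A : ℕ → ℝ := fun m => ∑ j ∈ Finset.Icc 1 n, t j m with hA
  have hperiodic_sum : ∀ F : ℕ → ℝ, (∀ i, F (i + n) = F i) →
      ∑ i ∈ Finset.range n, F i = ∑ j ∈ Finset.Icc 1 n, F j := by
    intro F hF
    rw [sum_Icc_one F n]
    exact (sum_range_shift F n (by have := hF 0; rwa [Nat.zero_add] at this)).symm
  have step1 : ∀ k, (∑ j ∈ Finset.Icc 1 n, p j * t j (2 * k)) = A (2 * k) - A (2 * k + 1) := by
    intro k
    have hp : ∀ j, p j = 1 - q j := by intro j; simp only [hq]; ring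
    have e1 : (∑ j ∈ Finset.Icc 1 n, p j * t j (2 * k))
        = A (2 * k) - ∑ j ∈ Finset.Icc 1 n, q j * t j (2 * k) := by
      rw [hA, ← Finset.sum_sub_distrib]
      exact Finset.sum_congr rfl fun j _ => by rw [hp j]; ring
    have e2 : (∑ j ∈ Finset.Icc 1 n, q j * t j (2 * k)) = A (2 * k + 1) := by
      have hGper : ∀ i, t (i + n) (2 * k + 1) = t i (2 * k + 1) := fun i => htper i _
      calc (∑ j ∈ Finset.Icc 1 n, q j * t j (2 * k))
          = ∑ i ∈ Finset.range n, q (i + 1) * t (i + 1) (2 * k) := by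
            rw [sum_Icc_one (fun j => q j * t j (2 * k)) n]
        _ = ∑ i ∈ Finset.range n, t i (2 * k + 1) := by
            exact Finset.sum_congr rfl fun i _ => (htbot i (2 * k)).symm
        _ = ∑ j ∈ Finset.Icc 1 n, t j (2 * k + 1) :=
            hperiodic_sum (fun i => t i (2 * k + 1)) hGper
        _ = A (2 * k + 1) := rfl
    rw [e1, e2]
  have step2 : (∑ j ∈ Finset.Icc 1 n, N j)
      = ∑ k ∈ Finset.range n, (A (2 * k + 1) - A (2 * k + 2)) := by
    have e1 : (∑ j ∈ Finset.Icc 1 n, N j)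
        = ∑ i ∈ Finset.range (2 * n), (-1 : ℝ) ^ i * A (i + 1) := by
      simp only [hN, hA, Finset.mul_sum]
      exact Finset.sum_comm
    rw [e1, sum_pair_aux]
    apply Finset.sum_congr rfl
    intro k _
    have h1 : (-1 : ℝ) ^ (2 * k) = 1 := (even_two_mul k).neg_one_pow
    have h2 : (-1 : ℝ) ^ (2 * k + 1) = -1 := by rw [pow_succ, h1]; ring
    rw [h1, h2, show 2 * k + 1 + 1 = 2 * k + 2 from rfl]
    ring
  have step4 : A (2 * n + 1) = Q ^ 2 * A 1 := by
    simp only [hA]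
    rw [Finset.mul_sum]
    apply Finset.sum_congr rfl
    intro j _
    rw [show 2 * n + 1 = 1 + 2 * n by ring, htadd j 1 (2 * n), hQ2 (j + 1)]
    ring
  have step3 : (∑ k ∈ Finset.Icc 1 n, (A (2 * k) - A (2 * k + 1)))
      + (∑ k ∈ Finset.range n, (A (2 * k + 1) - A (2 * k + 2)))
      = (1 - Q ^ 2) * A 1 := by
    have e1 : (∑ k ∈ Finset.Icc 1 n, (A (2 * k) - A (2 * k + 1)))
        = ∑ k ∈ Finset.range n, (A (2 * (k + 1)) - A (2 * (k + 1) + 1)) :=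
      sum_Icc_one (fun k => A (2 * k) - A (2 * k + 1)) n
    rw [e1, ← Finset.sum_add_distrib]
    have e2 : (∑ k ∈ Finset.range n,
        ((A (2 * (k + 1)) - A (2 * (k + 1) + 1)) + (A (2 * k + 1) - A (2 * k + 2))))
        = ∑ k ∈ Finset.range n,
            ((fun i => A (2 * i + 1)) k - (fun i => A (2 * i + 1)) (k + 1)) := by
      apply Finset.sum_congr rfl
      intro k _
      have : 2 * (k + 1) = 2 * k + 2 := by ring
      rw [this]
      ring_nf
    have hfin : A (2 * 0 + 1) - A (2 * n + 1) = (1 - Q ^ 2) * A 1 := by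
      have h01 : (2 : ℕ) * 0 + 1 = 1 := by norm_num
      rw [h01, step4]; ring
    rw [e2, Finset.sum_range_sub' (fun i => A (2 * i + 1)) n]
    exact hfin
  have hA1 : A 1 = ∑ j ∈ Finset.Icc 1 n, q j := by
    have e1 : ∀ j : ℕ, t j 1 = q (j + 1) := by
      intro j
      show (∏ i ∈ Finset.Icc (j + 1) (j + 1), q i) = q (j + 1)
      rw [Finset.Icc_self, Finset.prod_singleton]
    calc A 1 = ∑ j ∈ Finset.Icc 1 n, q (j + 1) := Finset.sum_congr rfl fun j _ => e1 j
      _ = ∑ j ∈ Finset.Icc 1 n, q j := sum_Icc_shift q n hqper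
  -- total numerator
  have hT : (∑ k ∈ Finset.Icc 1 n, ∑ j ∈ Finset.Icc 1 n, p j * t j (2 * k))
      = (1 - Q ^ 2) * ((∑ j ∈ Finset.Icc 1 n, q j) - ∑ j ∈ Finset.Icc 1 n, w j) := by
    have e1 : (∑ k ∈ Finset.Icc 1 n, ∑ j ∈ Finset.Icc 1 n, p j * t j (2 * k))
        = ∑ k ∈ Finset.Icc 1 n, (A (2 * k) - A (2 * k + 1)) :=
      Finset.sum_congr rfl fun k _ => step1 k
    have e2 : (∑ j ∈ Finset.Icc 1 n, N j) = (1 - Q ^ 2) * ∑ j ∈ Finset.Icc 1 n, w j := by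
      rw [Finset.mul_sum]
      apply Finset.sum_congr rfl
      intro j _
      rw [hw]
      field_simp
    rw [e1]
    have := step3
    rw [← step2] at this
    rw [hA1] at this
    linarith [e2, this]
  -- value of pCircD
  have hpc : pCircD p r s (1 - pA) (1 - pB)
      = ((∑ j ∈ Finset.Icc 1 n, q j) - ∑ j ∈ Finset.Icc 1 n, w j) / (n : ℝ) := by
    rw [pCircD]
    rw [← hn]
    have e0 : ∀ k j : ℕ, (∏ i ∈ Finset.Icc (j + 1) (j + 2 * k), (1 - p i)) = t j (2 * k) := by
      intro k j
      rfl
    have e1 : ∀ k : ℕ, (∑ j ∈ Finset.Icc 1 n, p j * ∏ i ∈ Finset.Icc (j + 1) (j + 2 * k), (1 - p i))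
        = ∑ j ∈ Finset.Icc 1 n, p j * t j (2 * k) := by
      intro k
      exact Finset.sum_congr rfl fun j _ => by rw [e0 k j]
    have e2 : ((1 - pA) ^ r * (1 - pB) ^ s) ^ 2 = Q ^ 2 := by rw [hprodQ]
    calc (1 / (n : ℝ)) * ∑ k ∈ Finset.Icc 1 n,
            (∑ j ∈ Finset.Icc 1 n, p j * ∏ i ∈ Finset.Icc (j + 1) (j + 2 * k), (1 - p i)) /
              (1 - ((1 - pA) ^ r * (1 - pB) ^ s) ^ 2)
        = (1 / (n : ℝ)) * ∑ k ∈ Finset.Icc 1 n,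
            (∑ j ∈ Finset.Icc 1 n, p j * t j (2 * k)) / (1 - Q ^ 2) := by
          congr 1
          exact Finset.sum_congr rfl fun k _ => by rw [e1 k, e2]
      _ = (1 / (n : ℝ)) * ((∑ k ∈ Finset.Icc 1 n, ∑ j ∈ Finset.Icc 1 n, p j * t j (2 * k))
            / (1 - Q ^ 2)) := by rw [Finset.sum_div]
      _ = ((∑ j ∈ Finset.Icc 1 n, q j) - ∑ j ∈ Finset.Icc 1 n, w j) / (n : ℝ) := by
          rw [hT]
          field_simp
  -- value of the RHS
  have hpoA : poArm pA = (1 - pA) ^ 2 / (1 + (1 - pA)) := poArm_eq pA hpA0 hpA1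
  have hpoB : poArm pB = (1 - pB) ^ 2 / (1 + (1 - pB)) := poArm_eq pB hpB0 hpB1
  have hRHS : (r : ℝ) * poArm pA + (s : ℝ) * poArm pB
      = ∑ j ∈ Finset.Icc 1 n, (q j) ^ 2 / (1 + q j) := by
    rw [← Finset.sum_filter_add_sum_filter_not (Finset.Icc 1 n) (fun i => p i = pA)
      (fun j => (q j) ^ 2 / (1 + q j))]
    have e1 : (∑ j ∈ (Finset.Icc 1 n).filter (fun i => p i = pA), (q j) ^ 2 / (1 + q j))
        = (r : ℝ) * poArm pA := by
      rw [Finset.sum_congr rfl (fun j hj => ?_), Finset.sum_const, hcardA, hpoA,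
        nsmul_eq_mul]
      rw [Finset.mem_filter] at hj
      simp only [hq, hj.2]
    have e2 : (∑ j ∈ (Finset.Icc 1 n).filter (fun i => ¬ p i = pA), (q j) ^ 2 / (1 + q j))
        = (s : ℝ) * poArm pB := by
      have hfilt : (Finset.Icc 1 n).filter (fun i => ¬ p i = pA)
          = (Finset.Icc 1 n).filter (fun i => p i = pB) := by
        apply Finset.filter_congr
        intro i _
        constructor
        · intro h
          rcases hval i with h' | h'
          · exact absurd h' h
          · exact h'
        · intro h hcc; exact hne (hcc.symm.trans h)
      rw [hfilt, Finset.sum_congr rfl (fun j hj => ?_), Finset.sum_const, hcardB, hpoB,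
        nsmul_eq_mul]
      rw [Finset.mem_filter] at hj
      simp only [hq, hj.2]
    rw [e1, e2]
  -- the core inequality: ∑ q/(1+q) < ∑ w
  have hq1' : ∀ j, 0 < 1 + q j := fun j => by linarith [hq0 j]
  have hwfrac : ∀ j, q (j + 1) / (1 + q (j + 1)) = w j / (1 + w j - w (j + 1)) := by
    intro j
    have h1 : (0 : ℝ) < 1 - w (j + 1) := by linarith [hw1 (j + 1)]
    have h2 : (0 : ℝ) < 1 + w j - w (j + 1) := by linarith [hw0 j]
    rw [div_eq_div_iff (ne_of_gt (hq1' (j + 1))) (ne_of_gt h2)]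
    have := hwrec j
    nlinarith [this]
  have hcore : (∑ j ∈ Finset.Icc 1 n, q j / (1 + q j)) < ∑ j ∈ Finset.Icc 1 n, w j := by
    have e1 : (∑ j ∈ Finset.Icc 1 n, q j / (1 + q j))
        = ∑ j ∈ Finset.Icc 1 n, w j / (1 + w j - w (j + 1)) := by
      rw [← sum_Icc_shift (fun j => q j / (1 + q j)) n
        (fun i => by show q (i + n) / (1 + q (i + n)) = q i / (1 + q i); rw [hqper])]
      exact Finset.sum_congr rfl fun j _ => hwfrac j
    rw [e1, ← sub_pos, ← Finset.sum_sub_distrib]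
    have hd : ∀ j, (0 : ℝ) < 1 + (w j - w (j + 1)) := by
      intro j; have := hw0 j; have := hw1 (j + 1); linarith
    have term_eq : ∀ j, w j - w j / (1 + w j - w (j + 1))
        = w j * (w j - w (j + 1))
          - w j * (w j - w (j + 1)) ^ 2 / (1 + (w j - w (j + 1))) := by
      intro j
      have h := frac_identity (w j) (w j - w (j + 1)) (hd j)
      rw [show 1 + w j - w (j + 1) = 1 + (w j - w (j + 1)) by ring]
      exact h
    have cyc : (∑ j ∈ Finset.Icc 1 n, w j * (w j - w (j + 1)))
        = ∑ j ∈ Finset.Icc 1 n, (w j - w (j + 1)) ^ 2 / 2 := by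
      have hshift2 : (∑ j ∈ Finset.Icc 1 n, (w (j + 1)) ^ 2 / 2)
          = ∑ j ∈ Finset.Icc 1 n, (w j) ^ 2 / 2 :=
        sum_Icc_shift (fun j => (w j) ^ 2 / 2) n
          (fun i => by show w (i + n) ^ 2 / 2 = w i ^ 2 / 2; rw [hwper])
      have e : (∑ j ∈ Finset.Icc 1 n,
          (w j * (w j - w (j + 1)) - (w j - w (j + 1)) ^ 2 / 2))
          = ∑ j ∈ Finset.Icc 1 n, ((w j) ^ 2 / 2 - (w (j + 1)) ^ 2 / 2) :=
        Finset.sum_congr rfl fun j _ => by ring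
      have e2 : (∑ j ∈ Finset.Icc 1 n, ((w j) ^ 2 / 2 - (w (j + 1)) ^ 2 / 2)) = 0 := by
        rw [Finset.sum_sub_distrib, hshift2, sub_self]
      have e3 := e.trans e2
      rw [Finset.sum_sub_distrib] at e3
      linarith
    have main_eq : (∑ j ∈ Finset.Icc 1 n, (w j - w j / (1 + w j - w (j + 1))))
        = ∑ j ∈ Finset.Icc 1 n, ((w j - w (j + 1)) ^ 2 / 2
            - w j * (w j - w (j + 1)) ^ 2 / (1 + (w j - w (j + 1)))) := by
      rw [Finset.sum_congr rfl fun j _ => term_eq j, Finset.sum_sub_distrib, cyc,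
        ← Finset.sum_sub_distrib]
    rw [main_eq]
    -- each term nonneg; some term positive
    have tnonneg : ∀ j, (0 : ℝ) ≤ (w j - w (j + 1)) ^ 2 / 2
        - w j * (w j - w (j + 1)) ^ 2 / (1 + (w j - w (j + 1))) := by
      intro j
      have h2 := hd j
      have h3 : (0 : ℝ) ≤ 1 - w j - w (j + 1) := le_of_lt (by linarith [hwsum1 j])
      rw [frac_identity2 (w j) (w j - w (j + 1)) h2,
        show 1 - 2 * w j + (w j - w (j + 1)) = 1 - w j - w (j + 1) by ring]
      exact mul_nonneg (sq_nonneg _) (div_nonneg h3 (by linarith))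
    have hex : ∃ j ∈ Finset.Icc 1 n, w j ≠ w (j + 1) := by
      by_contra hcon
      push_neg at hcon
      -- all w equal, hence q constant on Icc 1 n, contradicting mixed pattern
      have wconst : ∀ m, m ≤ n → w (1 + m) = w 1 := by
        intro m
        induction m with
        | zero => intro _; rfl
        | succ k ih =>
            intro hk
            have hk' : k ≤ n := by omega
            have h1 : (1 + k) ∈ Finset.Icc 1 n := by
              rw [Finset.mem_Icc]; omega
            have := hcon (1 + k) h1
            rw [show 1 + (k + 1) = (1 + k) + 1 by ring, ← this]
            exact ih hk'
      have hw1ne : (1 : ℝ) - w 1 ≠ 0 := by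
        have := hw1 1; intro h; linarith
      have qconst : ∀ i ∈ Finset.Icc 1 n, q i = w 1 / (1 - w 1) := by
        intro i hi
        rw [Finset.mem_Icc] at hi
        have key : ∀ j, 1 ≤ j → j ≤ n → q (j + 1) = w 1 / (1 - w 1) := by
          intro j hj1 hjn
          have e1 : w j = w 1 := by
            have : j = 1 + (j - 1) := by omega
            rw [this]; exact wconst (j - 1) (by omega)
          have e2 : w (j + 1) = w 1 := by
            have : j + 1 = 1 + j := by ring
            rw [this]; exact wconst j hjn
          have := hwrec j
          rw [e1, e2] at this
          rw [eq_div_iff hw1ne]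
          linarith
        by_cases h1 : i = 1
        · subst h1
          have : q 1 = q (n + 1) := by
            rw [show n + 1 = 1 + n by ring, hqper]
          rw [this]
          exact key n hn1 le_rfl
        · have : i = (i - 1) + 1 := by omega
          rw [this]
          exact key (i - 1) (by omega) (by omega)
      -- contradiction with the pattern being mixed
      have hAne : ((Finset.Icc 1 n).filter fun i => p i = pA).Nonempty := by
        rw [← Finset.card_pos, hcardA]; omega
      have hBne : ((Finset.Icc 1 n).filter fun i => p i = pB).Nonempty := by
        rw [← Finset.card_pos, hcardB]; omega
      obtain ⟨iA, hiA⟩ := hAne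
      obtain ⟨iB, hiB⟩ := hBne
      rw [Finset.mem_filter] at hiA hiB
      have k1 := qconst iA hiA.1
      have k2 := qconst iB hiB.1
      have : q iA = q iB := by rw [k1, k2]
      simp only [hq, hiA.2, hiB.2] at this
      exact hne (by linarith)
    obtain ⟨j0, hj0, hj0ne⟩ := hex
    apply Finset.sum_pos' (fun j _ => tnonneg j)
    refine ⟨j0, hj0, ?_⟩
    have h2 := hd j0
    have h3 : (0 : ℝ) < 1 - w j0 - w (j0 + 1) := by linarith [hwsum1 j0]
    have hdne : w j0 - w (j0 + 1) ≠ 0 := sub_ne_zero_of_ne hj0ne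
    rw [frac_identity2 (w j0) (w j0 - w (j0 + 1)) h2,
      show 1 - 2 * w j0 + (w j0 - w (j0 + 1)) = 1 - w j0 - w (j0 + 1) by ring]
    have hd2 : 0 < (w j0 - w (j0 + 1)) ^ 2 :=
      lt_of_le_of_ne (sq_nonneg _) (Ne.symm (pow_ne_zero 2 hdne))
    exact mul_pos hd2 (div_pos h3 (by linarith))
  -- conclude
  have hfrac : ∀ j, q j - (q j) ^ 2 / (1 + q j) = q j / (1 + q j) := by
    intro j
    have := hq1' j
    field_simp
    ring
  have hsum_lt : ((∑ j ∈ Finset.Icc 1 n, q j) - ∑ j ∈ Finset.Icc 1 n, w j)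
      < ∑ j ∈ Finset.Icc 1 n, (q j) ^ 2 / (1 + q j) := by
    have e : (∑ j ∈ Finset.Icc 1 n, q j) - (∑ j ∈ Finset.Icc 1 n, (q j) ^ 2 / (1 + q j))
        = ∑ j ∈ Finset.Icc 1 n, q j / (1 + q j) := by
      rw [← Finset.sum_sub_distrib]
      exact Finset.sum_congr rfl fun j _ => hfrac j
    linarith [hcore]
  have goal1 : pCircD p r s (1 - pA) (1 - pB)
      < ((r : ℝ) * poArm pA + (s : ℝ) * poArm pB) / ((r + s : ℕ) : ℝ) := by
    rw [hpc, hRHS, ← hn]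
    exact (div_lt_div_iff_of_pos_right hnpos).mpr hsum_lt
  refine ⟨goal1, ?_⟩
  rw [RD]
  rw [← hn] at goal1 ⊢
  have h2 : 2 * ((r : ℝ) * poArm pA + (s : ℝ) * poArm pB) / (n : ℝ)
      = 2 * (((r : ℝ) * poArm pA + (s : ℝ) * poArm pB) / (n : ℝ)) := by
    ring
  rw [h2]
  linarith [goal1]
end

section
/- (Algebraic core of Theorem 3.) Let q_A, q_B ∈ (0,1), let h ≥ 1, and let a_1, …, a_{2h} be positive integers. Define b_{2j−1} = (−1)^{a_{2j−1}} q_A^{a_{2j−1}} and b_{2j} = (−1)^{a_{2j}} q_B^{a_{2j}} for 1 ≤ j ≤ h, extended periodically with period 2h. Then Q = h + Σ_{m=1}^{2h} Σ_{j=1}^{2h−1} (−1)^j Π_{i=m}^{m+j−1} b_i + h Π_{i=1}^{2h} b_i is strictly positive. -/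
/-!
Write `x i = -b (i + 1)` and `n = 2h`. Then `Q` is the sum of the products of `x` over the cyclic
windows of lengths `1, …, n - 1`, plus `n (1 + P) / 2` with `P = x₀ ⋯ x_{n-1}`. No window is
longer than `n`, so `Q` is affine in each `xᵢ` separately, and its value at `x ∈ (-1, 1]ⁿ` is the
average of its values at the sign vectors `ε ∈ {±1}ⁿ` with weights `∏ᵢ (1 + εᵢ xᵢ) / 2 ≥ 0`.
At a sign vector, with partial products `g k = x₀ ⋯ x_{k-1}`, every window equals
`g k * g (k + j)` and `g (k + n) = P * g k`, so `Q = (1 + P) (∑ₖ g k)² / 2 ≥ 0`; at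
`ε = (1, …, 1)`, whose weight is positive, `Q = n² > 0`.
-/

open Finset

noncomputable def cyclicWindowSum (n : ℕ) (x : ℕ → ℝ) : ℝ :=
  ∑ k ∈ range n, ∑ j ∈ Ico 1 n, ∏ i ∈ Ico k (k + j), x i + n * (1 + ∏ i ∈ range n, x i) / 2

section SumIdentities

variable {R : Type*} [CommSemiring R]

lemma sum_mul_sum_Ico_eq (g : ℕ → R) (n : ℕ) :
    ∑ k ∈ range n, g k * ∑ v ∈ Ico (k + 1) n, g v =
      ∑ k ∈ range n, g k * ∑ v ∈ range k, g v := by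
  simp_rw [mul_sum]
  rw [sum_comm' (t' := range n) (s' := fun v => range v)]
  · simp_rw [mul_comm]
  · intro k v
    simp only [mem_range, mem_Ico]
    omega

lemma sq_sum_range_eq (g : ℕ → R) (n : ℕ) :
    (∑ k ∈ range n, g k) ^ 2 =
      ∑ k ∈ range n, g k ^ 2 + 2 * ∑ k ∈ range n, g k * ∑ v ∈ range k, g v := by
  have split : ∀ k ∈ range n, g k * ∑ v ∈ range n, g v =
      g k * ∑ v ∈ range k, g v + g k ^ 2 + g k * ∑ v ∈ Ico (k + 1) n, g v := by
    intro k hk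
    rw [← sum_range_add_sum_Ico g (mem_range.mp hk), sum_range_succ]
    ring
  rw [sq, sum_mul, sum_congr rfl split, sum_add_distrib, sum_add_distrib, sum_mul_sum_Ico_eq]
  ring

lemma sum_Ico_one_add_of_quasiperiodic {n : ℕ} (g : ℕ → R) (hg : ∀ v, g (n + v) = g n * g v)
    {k : ℕ} (hk : k < n) :
    ∑ j ∈ Ico 1 n, g (k + j) = ∑ v ∈ Ico (k + 1) n, g v + g n * ∑ v ∈ range k, g v := by
  rw [sum_Ico_add g, add_comm 1 k,
    ← sum_Ico_consecutive g (by omega : k + 1 ≤ n) (by omega : n ≤ n + k),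
    sum_Ico_eq_sum_range g n, add_tsub_cancel_left, mul_sum]
  simp only [hg]

end SumIdentities

section PartialProducts

variable {M : Type*} [CommMonoid M] {n : ℕ} {x : ℕ → M}

lemma prod_range_sq_of_sq_eq_one (hx : ∀ i, x i ^ 2 = 1) (u : ℕ) :
    (∏ i ∈ range u, x i) ^ 2 = 1 := by
  rw [← prod_pow]
  exact prod_eq_one fun i _ => hx i

lemma prod_Ico_of_sq_eq_one (hx : ∀ i, x i ^ 2 = 1) {a b : ℕ} (hab : a ≤ b) :
    ∏ i ∈ Ico a b, x i = (∏ i ∈ range a, x i) * ∏ i ∈ range b, x i := by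
  rw [← prod_range_mul_prod_Ico x hab, ← mul_assoc, ← sq, prod_range_sq_of_sq_eq_one hx,
    one_mul]

lemma prod_range_add_of_periodic (hper : Function.Periodic x n) (v : ℕ) :
    ∏ i ∈ range (n + v), x i = (∏ i ∈ range n, x i) * ∏ i ∈ range v, x i := by
  rw [prod_range_add]
  exact congrArg _ (prod_congr rfl fun i _ => by rw [add_comm, hper])

end PartialProducts

section Vertex

variable {n : ℕ} {x : ℕ → ℝ}

lemma cyclicWindowSum_of_sq_eq_one (hper : Function.Periodic x n) (hx : ∀ i, x i ^ 2 = 1) :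
    cyclicWindowSum n x =
      (1 + ∏ i ∈ range n, x i) * (∑ k ∈ range n, ∏ i ∈ range k, x i) ^ 2 / 2 := by
  have inner : ∀ k ∈ range n, ∑ j ∈ Ico 1 n, ∏ i ∈ Ico k (k + j), x i =
      (∏ i ∈ range k, x i) * (∑ v ∈ Ico (k + 1) n, ∏ i ∈ range v, x i +
        (∏ i ∈ range n, x i) * ∑ v ∈ range k, ∏ i ∈ range v, x i) := by
    intro k hk
    simp_rw [prod_Ico_of_sq_eq_one hx (Nat.le_add_right k _), ← mul_sum]
    exact congrArg _ (sum_Ico_one_add_of_quasiperiodic (fun u => ∏ i ∈ range u, x i)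
      (prod_range_add_of_periodic hper) (mem_range.mp hk))
  have diag : ∑ k ∈ range n, (∏ i ∈ range k, x i) ^ 2 = n := by
    simp [prod_range_sq_of_sq_eq_one hx]
  rw [cyclicWindowSum, sum_congr rfl inner, sq_sum_range_eq, diag]
  simp_rw [mul_add, sum_add_distrib, sum_mul_sum_Ico_eq, mul_left_comm _ (∏ i ∈ range n, x i),
    ← mul_sum]
  ring

lemma cyclicWindowSum_nonneg_of_sq_eq_one (hper : Function.Periodic x n)
    (hx : ∀ i, x i ^ 2 = 1) : 0 ≤ cyclicWindowSum n x := by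
  rw [cyclicWindowSum_of_sq_eq_one hper hx]
  have hP := prod_range_sq_of_sq_eq_one hx n
  have : 0 ≤ 1 + ∏ i ∈ range n, x i := by nlinarith
  positivity

end Vertex

lemma cyclicWindowSum_const_one (n : ℕ) : cyclicWindowSum n (fun _ => 1) = n ^ 2 := by
  rw [cyclicWindowSum_of_sq_eq_one (fun _ => rfl) (fun _ => one_pow 2)]
  simp only [prod_const_one, sum_const, card_range, nsmul_eq_mul, mul_one]
  ring

section SignAverage

variable {ι : Type*} [Fintype ι] [DecidableEq ι]

noncomputable def signVectors : Finset (ι → ℝ) := Fintype.piFinset fun _ => {1, -1}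

noncomputable def signWeight (y ε : ι → ℝ) : ℝ := ∏ r, (1 + ε r * y r) / 2

lemma sum_signWeight_mul_prod (y : ι → ℝ) (T : Finset ι) :
    ∑ ε ∈ signVectors, signWeight y ε * ∏ r ∈ T, ε r = ∏ r ∈ T, y r := by
  have factor : ∀ r, ∑ e ∈ ({1, -1} : Finset ℝ), (1 + e * y r) / 2 * (if r ∈ T then e else 1) =
      if r ∈ T then y r else 1 := by
    intro r
    split_ifs <;> rw [sum_pair (by norm_num)] <;> ring
  calc ∑ ε ∈ signVectors, signWeight y ε * ∏ r ∈ T, ε r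
      = ∑ ε ∈ Fintype.piFinset (fun _ => ({1, -1} : Finset ℝ)),
          ∏ r, (1 + ε r * y r) / 2 * (if r ∈ T then ε r else 1) := by
        simp_rw [signVectors, signWeight, ← Fintype.prod_ite_mem T, prod_mul_distrib]
    _ = ∏ r, ∑ e ∈ ({1, -1} : Finset ℝ), (1 + e * y r) / 2 * (if r ∈ T then e else 1) :=
        (prod_univ_sum (fun _ => {1, -1})
          fun r e => (1 + e * y r) / 2 * if r ∈ T then e else 1).symm
    _ = ∏ r, if r ∈ T then y r else 1 := prod_congr rfl fun r _ => factor r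
    _ = ∏ r ∈ T, y r := Fintype.prod_ite_mem T y

lemma sum_signWeight (y : ι → ℝ) : ∑ ε ∈ signVectors, signWeight y ε = 1 := by
  simpa using sum_signWeight_mul_prod y ∅

lemma signWeight_nonneg {y ε : ι → ℝ} (hy : ∀ r, |y r| ≤ 1) (hε : ε ∈ signVectors) :
    0 ≤ signWeight y ε := by
  refine prod_nonneg fun r _ => ?_
  have := abs_le.mp (hy r)
  rcases mem_insert.mp (Fintype.mem_piFinset.mp hε r) with h | h <;> simp_all <;> linarith

lemma sq_eq_one_of_mem_signVectors {ε : ι → ℝ} (hε : ε ∈ signVectors) (r : ι) : ε r ^ 2 = 1 := by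
  rcases mem_insert.mp (Fintype.mem_piFinset.mp hε r) with h | h <;> simp_all

end SignAverage

lemma natCast_injOn_Ico (n k : ℕ) :
    Set.InjOn (Nat.cast : ℕ → ZMod n) (Ico k (k + n) : Finset ℕ) :=
  fun a ha b hb hab => Nat.mod_injOn_Ico k n ha hb ((ZMod.natCast_eq_natCast_iff' a b n).mp hab)

section ZModWindows

variable {n : ℕ} [NeZero n]

lemma prod_natCast_eq_sum_signWeight (y : ZMod n → ℝ) {W : Finset ℕ}
    (hW : Set.InjOn (Nat.cast : ℕ → ZMod n) W) :
    ∏ i ∈ W, y i = ∑ ε ∈ signVectors, signWeight y ε * ∏ i ∈ W, ε i := by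
  simp_rw [← prod_image hW, sum_signWeight_mul_prod]

lemma cyclicWindowSum_eq_sum_signWeight (y : ZMod n → ℝ) :
    cyclicWindowSum n (fun i => y i) =
      ∑ ε ∈ signVectors, signWeight y ε * cyclicWindowSum n (fun i => ε i) := by
  have window : ∀ k j, j ≤ n → Set.InjOn (Nat.cast : ℕ → ZMod n) (Ico k (k + j) : Finset ℕ) :=
    fun k j hj => (natCast_injOn_Ico n k).mono
      (coe_subset.mpr (Ico_subset_Ico_right (Nat.add_le_add_left hj k)))
  have full : Set.InjOn (Nat.cast : ℕ → ZMod n) (range n : Finset ℕ) := by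
    have := natCast_injOn_Ico n 0
    rwa [zero_add, ← range_eq_Ico] at this
  have windows : ∀ k ∈ range n, ∀ j ∈ Ico 1 n, ∏ i ∈ Ico k (k + j), y i =
      ∑ ε ∈ signVectors, signWeight y ε * ∏ i ∈ Ico k (k + j), ε i := fun k _ j hj =>
    prod_natCast_eq_sum_signWeight y (window k j (mem_Ico.mp hj).2.le)
  rw [cyclicWindowSum, ← sum_signWeight y, prod_natCast_eq_sum_signWeight y full,
    sum_congr rfl fun k hk => sum_congr rfl (windows k hk)]
  simp_rw [cyclicWindowSum, mul_add, sum_add_distrib, mul_sum]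
  congr 1
  · rw [sum_comm (s := signVectors)]
    exact sum_congr rfl fun _ _ => sum_comm
  · rw [← sum_add_distrib, sum_div]
    exact sum_congr rfl fun _ _ => by ring

end ZModWindows

theorem cyclicWindowSum_pos {n : ℕ} (hn : 0 < n) {x : ℕ → ℝ} (hper : Function.Periodic x n)
    (hx : ∀ i, x i ∈ Set.Ioc (-1) 1) : 0 < cyclicWindowSum n x := by
  have : NeZero n := ⟨hn.ne'⟩
  set y : ZMod n → ℝ := fun r => x r.val
  have hxy : (fun i : ℕ => y i) = x :=
    funext fun i => by simp [y, ZMod.val_natCast, hper.map_mod_nat]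
  have hy : ∀ r, |y r| ≤ 1 := fun r => abs_le.mpr ⟨(hx _).1.le, (hx _).2⟩
  rw [← hxy, cyclicWindowSum_eq_sum_signWeight]
  refine sum_pos' (fun ε hε => mul_nonneg (signWeight_nonneg hy hε) ?_)
    ⟨fun _ => 1, ?_, mul_pos ?_ ?_⟩
  · exact cyclicWindowSum_nonneg_of_sq_eq_one (fun i => by simp)
      fun i => sq_eq_one_of_mem_signVectors hε _
  · simp [signVectors]
  · exact prod_pos fun r _ => by linarith [(hx r.val).1]
  · rw [cyclicWindowSum_const_one]
    positivity

@[to_additive]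
lemma prod_range_succ_eq_prod_Icc {M : Type*} [CommMonoid M] (f : ℕ → M) (n : ℕ) :
    ∏ k ∈ range n, f (k + 1) = ∏ i ∈ Icc 1 n, f i := by
  rw [range_eq_Ico, prod_Ico_add', zero_add, Ico_add_one_right_eq_Icc]

lemma neg_one_pow_mul_prod_Icc (b : ℕ → ℝ) (k : ℕ) {j : ℕ} (hj : 1 ≤ j) :
    (-1) ^ j * ∏ i ∈ Icc (k + 1) (k + 1 + j - 1), b i = ∏ i ∈ Ico k (k + j), -b (i + 1) := by
  rw [prod_Ico_add' (fun i => -b i), prod_neg, Nat.card_Ico, Ico_add_one_right_eq_Icc]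
  rw [show k + j + 1 - (k + 1) = j by omega, show k + 1 + j - 1 = k + j by omega]

lemma alternating_windowSum_eq_cyclicWindowSum (h : ℕ) (b : ℕ → ℝ) :
    (h : ℝ) + (∑ m ∈ Icc 1 (2 * h), ∑ j ∈ Icc 1 (2 * h - 1),
        (-1 : ℝ) ^ j * ∏ i ∈ Icc m (m + j - 1), b i) + h * ∏ i ∈ Icc 1 (2 * h), b i =
      cyclicWindowSum (2 * h) (fun i => -b (i + 1)) := by
  have hIcc : Icc 1 (2 * h - 1) = Ico 1 (2 * h) := by ext; simp; omega
  have hprod : ∏ i ∈ Icc 1 (2 * h), b i = ∏ i ∈ range (2 * h), -b (i + 1) := by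
    rw [prod_neg, card_range, (even_two_mul h).neg_one_pow, one_mul, ← prod_range_succ_eq_prod_Icc]
  rw [cyclicWindowSum, ← sum_range_succ_eq_sum_Icc, hIcc, hprod]
  rw [sum_congr rfl fun k _ => sum_congr rfl fun j hj =>
    neg_one_pow_mul_prod_Icc b k (mem_Ico.mp hj).1]
  push_cast
  ring

lemma abs_neg_one_pow_mul_pow_lt_one {q : ℝ} (hq : q ∈ Set.Ioo 0 1) {e : ℕ} (he : 1 ≤ e) :
    |(-1) ^ e * q ^ e| < 1 := by
  rw [abs_mul, abs_pow, abs_pow, abs_neg, abs_one, one_pow, one_mul, abs_of_pos hq.1]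
  exact pow_lt_one₀ hq.1.le hq.2 (by omega)

/-- Algebraic core of Theorem 3: for `q_A, q_B ∈ (0,1)`, `h ≥ 1`, positive integers
`a_1, …, a_{2h}`, and `b_{2j−1} = (−1)^{a_{2j−1}} q_A^{a_{2j−1}}`,
`b_{2j} = (−1)^{a_{2j}} q_B^{a_{2j}}` extended periodically with period `2h`,
the quantity
`Q = h + Σ_{m=1}^{2h} Σ_{j=1}^{2h−1} (−1)^j Π_{i=m}^{m+j−1} b_i + h Π_{i=1}^{2h} b_i`
is strictly positive. -/
theorem Q_pos_algebraic_core
    (qA qB : ℝ) (hqA : qA ∈ Set.Ioo (0 : ℝ) 1) (hqB : qB ∈ Set.Ioo (0 : ℝ) 1)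
    (h : ℕ) (hh : 1 ≤ h)
    (a : ℕ → ℕ) (ha : ∀ k, 1 ≤ k → k ≤ 2 * h → 1 ≤ a k)
    (b : ℕ → ℝ)
    (hbper : ∀ i, b (i + 2 * h) = b i)
    (hb : ∀ j, 1 ≤ j → j ≤ h →
        b (2 * j - 1) = (-1 : ℝ) ^ a (2 * j - 1) * qA ^ a (2 * j - 1) ∧
        b (2 * j) = (-1 : ℝ) ^ a (2 * j) * qB ^ a (2 * j)) :
    0 < (h : ℝ)
        + (∑ m ∈ Finset.Icc 1 (2 * h), ∑ j ∈ Finset.Icc 1 (2 * h - 1),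
            (-1 : ℝ) ^ j * ∏ i ∈ Finset.Icc m (m + j - 1), b i)
        + (h : ℝ) * ∏ i ∈ Finset.Icc 1 (2 * h), b i := by
  have hb_lt : ∀ k, 1 ≤ k → k ≤ 2 * h → |b k| < 1 := by
    intro k hk1 hk2
    rcases Nat.even_or_odd' k with ⟨j, rfl | rfl⟩
    · rw [(hb j (by omega) (by omega)).2]
      exact abs_neg_one_pow_mul_pow_lt_one hqB (ha _ hk1 hk2)
    · have := (hb (j + 1) (by omega) (by omega)).1
      rw [show 2 * (j + 1) - 1 = 2 * j + 1 by omega] at this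
      rw [this]
      exact abs_neg_one_pow_mul_pow_lt_one hqA (ha _ hk1 hk2)
  have hper : Function.Periodic (fun i => -b (i + 1)) (2 * h) := fun i => by
    simp only [add_right_comm i, hbper]
  have hx : ∀ i, -b (i + 1) ∈ Set.Ioc (-1) 1 := fun i => by
    have := abs_lt.mp (hb_lt (i % (2 * h) + 1) (by omega) (Nat.mod_lt i (by omega)))
    rw [← hper.map_mod_nat i]
    exact ⟨by linarith, by linarith⟩
  rw [alternating_windowSum_eq_cyclicWindowSum]
  exact cyclicWindowSum_pos (by omega) hper hx
end

section
/- (Lemma of Section 5: the pattern ABABBABBB.) Let p_A, p_B ∈ (0,1) with p_A ≠ p_B, and let D = ABABBABBB (so r = 3, s = 6, h = 3, block vector a = (1,1,1,2,1,3), and with x = q_A, y = q_B the associated values are b_1 = −x, b_2 = −y, b_3 = −x, b_4 = y², b_5 = −x, b_6 = −y³, extended with period 6). Then R_D = 2S[ (1+x)²(1+xy)(1−y²)(1+y³) + (1+y)(1−x²)(1+x)(1+y⁵) + (1+x³)(1−y⁶) ], and consequently R_D > 0. -/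
open Finset

/-- `S = (q_A − q_B)²(1 + (−1)^{r+s} q_A^r q_B^s) /
      ((r+s)(1+q_A)²(1+q_B)²(1 − (q_A^r q_B^s)²))`. -/
noncomputable def Sval (qA qB : ℝ) (r s : ℕ) : ℝ :=
  (qA - qB) ^ 2 * (1 + (-1 : ℝ) ^ (r + s) * qA ^ r * qB ^ s) /
    (((r + s : ℕ) : ℝ) * (1 + qA) ^ 2 * (1 + qB) ^ 2 * (1 - (qA ^ r * qB ^ s) ^ 2))

/-- The strategy `D = ABABBABBB`: `p_i = p_A` for `i ≡ 1, 3, 6 (mod 9)` and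
`p_i = p_B` otherwise. -/
noncomputable def patternABABBABBB (pA pB : ℝ) (i : ℕ) : ℝ :=
  if i % 9 = 1 ∨ i % 9 = 3 ∨ i % 9 = 6 then pA else pB

/-! With `x = q_A` and `y = q_B` every factor `1 - p_i` of `p°_D` is `x` or `y`, so each of
the `9 · 9` terms of the double sum is `(1 - x)` or `(1 - y)` times a monomial, and the whole
numerator is an explicit polynomial in `x, y` of degree `19`. Likewise `p°_A = x² / (1 + x)`,
so the formula for `R_D` is an identity of rational functions. Positivity is then read off the
factored form: `S > 0` because `x ≠ y` and `x³y⁶ < 1`, and each summand of the bracket is a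
product of positive factors. -/

theorem poArm_one_sub {x : ℝ} (hx : x ≠ 1) : poArm (1 - x) = x ^ 2 / (1 + x) := by
  rw [poArm, sub_sub_cancel, show (1 : ℝ) - x ^ 2 = (1 - x) * (1 + x) by ring,
    mul_div_mul_left _ _ (sub_ne_zero.mpr hx.symm)]

theorem pow_mul_pow_lt_one {x y : ℝ} {r s : ℕ} (hx : x ∈ Set.Ico (0 : ℝ) 1)
    (hy : y ∈ Set.Ico (0 : ℝ) 1) (hrs : r + s ≠ 0) : x ^ r * y ^ s < 1 := by
  obtain ⟨hx0, hx1⟩ := hx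
  obtain ⟨hy0, hy1⟩ := hy
  rcases Nat.eq_zero_or_pos r with rfl | hr
  · simpa using pow_lt_one₀ hy0 hy1 (by omega)
  · exact mul_lt_one_of_nonneg_of_lt_one_left (by positivity) (pow_lt_one₀ hx0 hx1 hr.ne')
      (pow_le_one₀ hy0 hy1.le)

theorem Sval_pos {x y : ℝ} {r s : ℕ} (hx : x ∈ Set.Ico (0 : ℝ) 1) (hy : y ∈ Set.Ico (0 : ℝ) 1)
    (hxy : x ≠ y) (hrs : r + s ≠ 0) : 0 < Sval x y r s := by
  have hc := pow_mul_pow_lt_one hx hy hrs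
  have hc0 : 0 ≤ x ^ r * y ^ s := mul_nonneg (pow_nonneg hx.1 r) (pow_nonneg hy.1 s)
  have hsign : 0 < 1 + (-1 : ℝ) ^ (r + s) * x ^ r * y ^ s := by
    rw [mul_assoc]
    rcases neg_one_pow_eq_or ℝ (r + s) with h | h <;> rw [h] <;> linarith
  have hsq : 0 < 1 - (x ^ r * y ^ s) ^ 2 := by nlinarith
  have hxy' : 0 < (x - y) ^ 2 := by positivity [sub_ne_zero.mpr hxy]
  have hrs' : (0 : ℝ) < ((r + s : ℕ) : ℝ) := by positivity
  have hx' : 0 < 1 + x := by linarith [hx.1]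
  have hy' : 0 < 1 + y := by linarith [hy.1]
  unfold Sval
  positivity

theorem sum_numerator_patternABABBABBB (x y : ℝ) :
    ∑ k ∈ Icc 1 9, ∑ j ∈ Icc 1 9, patternABABBABBB (1 - x) (1 - y) j *
        ∏ i ∈ Icc (j + 1) (j + 2 * k), (1 - patternABABBABBB (1 - x) (1 - y) i) =
      3*y^2 - y^3 + 6*x*y - 7*x*y^2 + 6*x*y^3 - 3*x*y^4 + x*y^5 - x^2*y + 3*x^2*y^2 - 6*x^2*y^3
      + 7*x^2*y^4 - 6*x^2*y^5 + 3*x^2*y^6 + x^3*y^3 - 3*x^3*y^4 + 6*x^3*y^5 - 9*x^3*y^6 + 6*x^3*y^7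
      - 3*x^3*y^8 + x^3*y^9 + 3*x^4*y^6 - 6*x^4*y^7 + 7*x^4*y^8 - 6*x^4*y^9 + 3*x^4*y^10 - x^4*y^11
      + x^5*y^7 - 3*x^5*y^8 + 6*x^5*y^9 - 7*x^5*y^10 + 6*x^5*y^11 - 3*x^5*y^12 - x^6*y^9 + 3*x^6*y^10
      - 6*x^6*y^11 + 9*x^6*y^12 - 6*x^6*y^13 - 3*x^7*y^12 := by
  simp only [patternABABBABBB, ite_mul, Nat.reduceAdd, Nat.one_le_ofNat, sum_Icc_succ_top, Icc_self,
    sum_singleton, Nat.one_mod, OfNat.one_ne_ofNat, or_self, or_false, ↓reduceIte, Nat.reduceMod,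
    OfNat.ofNat_ne_one, Nat.reduceEqDiff, or_true, Nat.succ_ne_self, Nat.mod_succ, Nat.mod_self,
    zero_ne_one, OfNat.zero_ne_ofNat, mul_one, Nat.reduceLeDiff, prod_Icc_succ_top, prod_singleton,
    sub_sub_cancel, Nat.reduceMul]
  ring

theorem RD_patternABABBABBB {x y : ℝ} (hx : x ∈ Set.Ico (0 : ℝ) 1) (hy : y ∈ Set.Ico (0 : ℝ) 1) :
    RD (patternABABBABBB (1 - x) (1 - y)) 3 6 (1 - x) (1 - y) =
      2 * Sval x y 3 6 *
        ((1 + x) ^ 2 * (1 + x * y) * (1 - y ^ 2) * (1 + y ^ 3)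
          + (1 + y) * (1 - x ^ 2) * (1 + x) * (1 + y ^ 5) + (1 + x ^ 3) * (1 - y ^ 6)) := by
  have hc : (x ^ 3 * y ^ 6) ^ 2 < 1 :=
    pow_lt_one₀ (by positivity [hx.1, hy.1]) (pow_mul_pow_lt_one hx hy (by norm_num)) two_ne_zero
  have hD : 1 - (x ^ 3 * y ^ 6) ^ 2 ≠ 0 := (sub_pos.mpr hc).ne'
  have hx' : 1 + x ≠ 0 := by linarith [hx.1]
  have hy' : 1 + y ≠ 0 := by linarith [hy.1]
  rw [RD, sub_sub_cancel, sub_sub_cancel, pCircD, ← sum_div, sum_numerator_patternABABBABBB,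
    poArm_one_sub hx.2.ne, poArm_one_sub hy.2.ne, Sval]
  -- otherwise `field_simp` rewrites `(x ^ 3 * y ^ 6) ^ 2` and no longer sees `hD`
  generalize hDdef : 1 - (x ^ 3 * y ^ 6) ^ 2 = D at hD ⊢
  norm_num only [Nat.cast_ofNat]
  field_simp
  subst hDdef
  ring

theorem patternABABBABBB_bracket_pos {x y : ℝ} (hx : x ∈ Set.Ico (0 : ℝ) 1)
    (hy : y ∈ Set.Ico (0 : ℝ) 1) :
    0 < (1 + x) ^ 2 * (1 + x * y) * (1 - y ^ 2) * (1 + y ^ 3)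
      + (1 + y) * (1 - x ^ 2) * (1 + x) * (1 + y ^ 5) + (1 + x ^ 3) * (1 - y ^ 6) := by
  obtain ⟨hx0, hx1⟩ := hx
  obtain ⟨hy0, hy1⟩ := hy
  have hy2 : 0 < 1 - y ^ 2 := sub_pos.mpr (pow_lt_one₀ hy0 hy1 two_ne_zero)
  have hx2 : 0 < 1 - x ^ 2 := sub_pos.mpr (pow_lt_one₀ hx0 hx1 two_ne_zero)
  have hy6 : 0 < 1 - y ^ 6 := sub_pos.mpr (pow_lt_one₀ hy0 hy1 (by norm_num))
  positivity

/-- Lemma of Section 5: for the pattern `D = ABABBABBB` (so `r = 3`, `s = 6`),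
with `x = q_A` and `y = q_B`,
`R_D = 2S[(1+x)²(1+xy)(1−y²)(1+y³) + (1+y)(1−x²)(1+x)(1+y⁵) + (1+x³)(1−y⁶)]`,
and consequently `R_D > 0`. -/
theorem pattern_ABABBABBB_profit
    (pA pB qA qB : ℝ) (hpA : pA ∈ Set.Ioo (0 : ℝ) 1) (hpB : pB ∈ Set.Ioo (0 : ℝ) 1)
    (hne : pA ≠ pB) (hqA : qA = 1 - pA) (hqB : qB = 1 - pB) :
    RD (patternABABBABBB pA pB) 3 6 pA pB
        = 2 * Sval qA qB 3 6 *
            ((1 + qA) ^ 2 * (1 + qA * qB) * (1 - qB ^ 2) * (1 + qB ^ 3)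
              + (1 + qB) * (1 - qA ^ 2) * (1 + qA) * (1 + qB ^ 5)
              + (1 + qA ^ 3) * (1 - qB ^ 6)) ∧
      0 < RD (patternABABBABBB pA pB) 3 6 pA pB := by
  obtain rfl : pA = 1 - qA := by linarith
  obtain rfl : pB = 1 - qB := by linarith
  have hx : qA ∈ Set.Ico (0 : ℝ) 1 := ⟨by linarith [hpA.2], by linarith [hpA.1]⟩
  have hy : qB ∈ Set.Ico (0 : ℝ) 1 := ⟨by linarith [hpB.2], by linarith [hpB.1]⟩
  have hxy : qA ≠ qB := fun h => hne (by rw [h])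
  rw [RD_patternABABBABBB hx hy]
  exact ⟨rfl, mul_pos (mul_pos two_pos (Sval_pos hx hy hxy (by norm_num)))
    (patternABABBABBB_bracket_pos hx hy)⟩
end
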